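/- arXiv:1911.12108 — 4 statements merged into one kernel-verified Lean document; each statement's English description precedes it below -/
import Mathlib

section
/- For every positive integer n and every finite weak antichain A in ℤ^n, the size of A is at most the sum of the sizes of its (n−1)-dimensional projections: |A| ≤ Σ_{i=1}^n |π_i(A)|. -/
namespace ProjWA

variable {ι : Type*}

/-- `A ⊆ ℤ^ι` is a weak antichain if it contains no `x, y` with `x i < y i` for every `i`. -/
def IsWeakAntichain [Fintype ι] (A : Finset (ι → ℤ)) : Prop :=
  ∀ x ∈ A, ∀ y ∈ A, ¬ ∀ i, x i < y i

/-- The projection deleting the coordinate `i`. -/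
def projFun [DecidableEq ι] (i : ι) (x : ι → ℤ) : {j : ι // j ≠ i} → ℤ :=
  fun j => x j.1

/-- The image of a finite set under the projection deleting coordinate `i`. -/
def proj [Fintype ι] [DecidableEq ι] (i : ι) (A : Finset (ι → ℤ)) :
    Finset ({j : ι // j ≠ i} → ℤ) :=
  A.image (projFun i)

/-- `gap A = Σ_i |π_i(A)| - |A|`. -/
def gap [Fintype ι] [DecidableEq ι] (A : Finset (ι → ℤ)) : ℤ :=
  (∑ i : ι, ((proj i A).card : ℤ)) - A.card

/-- `X_n`: the set of points of `ℤ_{≥0}^ι` having at least one coordinate equal to zero. -/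
def XSet (ι : Type*) : Set (ι → ℤ) :=
  {x | (∀ i, 0 ≤ x i) ∧ ∃ i, x i = 0}

/-- A down-set in `ℤ_{≥0}^ι`. -/
def IsDownSet (A : Finset (ι → ℤ)) : Prop :=
  ∀ x y : ι → ℤ, (∀ i, 0 ≤ x i) → (∀ i, x i ≤ y i) → y ∈ A → x ∈ A

/-- The `i`-th bottom layer `B_i(A)`. -/
def bottomLayer [Fintype ι] [DecidableEq ι] (i : ι) (A : Finset (ι → ℤ)) : Finset (ι → ℤ) :=
  A.filter fun x => ∀ y ∈ A, (∀ j, j ≠ i → y j = x j) → x i ≤ y i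

/-- The `i`-compression `C_i(A)`: each `x ∈ B_i(A)` is replaced by the point obtained
by setting its `i`-th coordinate to `0`. -/
def compress [Fintype ι] [DecidableEq ι] (i : ι) (A : Finset (ι → ℤ)) : Finset (ι → ℤ) :=
  (A \ bottomLayer i A) ∪ (bottomLayer i A).image fun x => Function.update x i 0

/-- `layersRest A k = A \ (A_1 ∪ ⋯ ∪ A_k)` where `A_i` are the layers of `A`. -/
def layersRest {n : ℕ} (A : Finset (Fin n → ℤ)) : ℕ → Finset (Fin n → ℤ)
  | 0 => A
  | k + 1 =>
      layersRest A k \ (if h : k < n then bottomLayer ⟨k, h⟩ (layersRest A k) else ∅)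

/-- The layers `A_1, …, A_n` of `A`, defined by `A_i = B_i(A \ (A_1 ∪ ⋯ ∪ A_{i-1}))`. -/
def layer {n : ℕ} (A : Finset (Fin n → ℤ)) (i : Fin n) : Finset (Fin n → ℤ) :=
  bottomLayer i (layersRest A i.1)

/-- `compressUpTo A k = C_k(C_{k-1}(⋯(C_1(A))⋯))`. -/
def compressUpTo {n : ℕ} (A : Finset (Fin n → ℤ)) : ℕ → Finset (Fin n → ℤ)
  | 0 => A
  | k + 1 =>
      if h : k < n then compress ⟨k, h⟩ (compressUpTo A k) else compressUpTo A k

/-- The complete `i`-compression `𝒞_i(A)`: every line in direction `i` is replaced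
by an initial segment of the same size. -/
def ccompress [Fintype ι] [DecidableEq ι] (i : ι) (A : Finset (ι → ℤ)) : Finset (ι → ℤ) :=
  A.biUnion fun x =>
    (Finset.range ((A.filter fun y => ∀ j, j ≠ i → y j = x j).card)).image fun a : ℕ =>
      Function.update x i (a : ℤ)

/-- The set `T = {i : x i ≠ y i}` of coordinates where `x` and `y` differ. -/
def diffSet [Fintype ι] (x y : ι → ℤ) : Finset ι :=
  Finset.univ.filter fun i => x i ≠ y i

/-- The maximum value of `x` on a finite set of coordinates (`⊥` if the set is empty). -/
def maxOn (s : Finset ι) (x : ι → ℤ) : WithBot ℤ :=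
  (s.image x).max

/-- The largest coordinate in `s` at which `x` attains its maximum over `s`. -/
def argmaxOn [LinearOrder ι] (s : Finset ι) (x : ι → ℤ) : WithBot ι :=
  (s.filter fun i => (x i : WithBot ℤ) = maxOn s x).max

/-- The balanced order: with `T = {i : x i ≠ y i}`, `x < y` iff the maximum of `x` on `T` is
smaller than that of `y` on `T`, or they are equal and the largest index where `x` attains
this maximum on `T` is smaller than the corresponding index for `y`. -/
def balancedLT [Fintype ι] [LinearOrder ι] (x y : ι → ℤ) : Prop :=
  x ≠ y ∧
    (maxOn (diffSet x y) x < maxOn (diffSet x y) y ∨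
      (maxOn (diffSet x y) x = maxOn (diffSet x y) y ∧
        argmaxOn (diffSet x y) x < argmaxOn (diffSet x y) y))

/-- `I` is an initial segment of the balanced order on `X_ι`. -/
def IsInitSeg [Fintype ι] [LinearOrder ι] (I : Finset (ι → ℤ)) : Prop :=
  ↑I ⊆ XSet ι ∧ ∀ x ∈ I, ∀ y ∈ XSet ι, balancedLT y x → y ∈ I

/-- `S(A) = {x ∈ ℤ_{>0}^ι : replacing any one coordinate of x by 0 gives an element of A}`. -/
def SSet [DecidableEq ι] (A : Finset (ι → ℤ)) : Set (ι → ℤ) :=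
  {x | (∀ k, 0 < x k) ∧ ∀ k, Function.update x k 0 ∈ A}

/-- Insert the value `a` at position `i`. -/
def insertAt [DecidableEq ι] (i : ι) (a : ℤ) (x : {j : ι // j ≠ i} → ℤ) : ι → ℤ :=
  fun j => if h : j = i then a else x ⟨j, h⟩

/-- `L^i_a(A)`: the elements of `X_{n-1}` which, after inserting the value `a` at
position `i`, give elements of `A`. -/
def Lset [Fintype ι] [DecidableEq ι] (i : ι) (a : ℤ) (A : Finset (ι → ℤ)) :
    Finset ({j : ι // j ≠ i} → ℤ) :=
  (proj i (A.filter fun x => x i = a)).filter fun x' => ∃ j, x' j = 0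

/-- `K^i(A)`: the elements of `ℤ_{>0}^{n-1}` which, after inserting a `0` at position `i`,
give elements of `A`. -/
def Kset [Fintype ι] [DecidableEq ι] (i : ι) (A : Finset (ι → ℤ)) :
    Finset ({j : ι // j ≠ i} → ℤ) :=
  (proj i (A.filter fun x => x i = 0)).filter fun x' => ∀ j, 0 < x' j

/-- `K` is an initial segment of `ℤ_{>0}^{n-1}` with respect to the order `≺` defined by
`x ≺ y` iff inserting a `0` at position `i` into `x` gives a smaller element of `X_n`
(in the balanced order) than inserting a `0` at position `i` into `y`. -/
def IsKInitSeg [Fintype ι] [LinearOrder ι] (i : ι) (K : Finset ({j : ι // j ≠ i} → ℤ)) :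
    Prop :=
  (∀ x ∈ K, ∀ j, 0 < x j) ∧
    ∀ x ∈ K, ∀ y : {j : ι // j ≠ i} → ℤ, (∀ j, 0 < y j) →
      balancedLT (insertAt i 0 y) (insertAt i 0 x) → y ∈ K

/-- `A_N = {x ∈ ℤ^n : 0 ≤ x_j ≤ N-1 for all j, and x_i = 0 for some i}`. -/
def ANbox (n N : ℕ) : Finset (Fin n → ℤ) :=
  (Fintype.piFinset fun _ : Fin n => (Finset.range N).image fun k : ℕ => (k : ℤ)).filter
    fun x => ∃ i, x i = 0

/-- `g(n,m)`: the minimum of `gap A` over weak antichains `A` of size `m` in `ℤ^n`. -/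
noncomputable def gMin (n m : ℕ) : ℝ :=
  sInf {r : ℝ | ∃ A : Finset (Fin n → ℤ), IsWeakAntichain A ∧ A.card = m ∧ (gap A : ℝ) = r}

/-! Peel off from `A` its bottom layer in direction `i₁`, then the bottom layer of what remains
in direction `i₂`, and so on through all coordinates. A bottom layer in direction `i` meets every
line in direction `i` at most once, so it injects into `π_i(A)`. A point that survives every
peeling lies strictly above some point of `A` in every coordinate, so for a weak antichain
nothing survives. -/

section Peeling

variable [Fintype ι] [DecidableEq ι]

lemma bottomLayer_subset (i : ι) (S : Finset (ι → ℤ)) : bottomLayer i S ⊆ S :=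
  Finset.filter_subset _ _

lemma exists_lt_of_notMem_bottomLayer {i : ι} {S : Finset (ι → ℤ)} {x : ι → ℤ}
    (hx : x ∈ S) (hxB : x ∉ bottomLayer i S) :
    ∃ y ∈ S, (∀ j, j ≠ i → y j = x j) ∧ y i < x i := by
  simpa only [bottomLayer, Finset.mem_filter, hx, true_and, not_forall, not_le, exists_prop]
    using hxB

lemma injOn_projFun_bottomLayer (i : ι) (S : Finset (ι → ℤ)) :
    Set.InjOn (projFun i) (bottomLayer i S) := by
  intro x hx y hy hxy
  have hoff : ∀ j, j ≠ i → x j = y j := fun j hj => congrFun hxy ⟨j, hj⟩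
  simp only [bottomLayer, Finset.coe_filter] at hx hy
  funext j
  by_cases hj : j = i
  · subst hj
    exact le_antisymm (hx.2 y hy.1 fun j hj => (hoff j hj).symm) (hy.2 x hx.1 hoff)
  · exact hoff j hj

lemma card_bottomLayer_le_card_proj {i : ι} {S A : Finset (ι → ℤ)} (hSA : S ⊆ A) :
    (bottomLayer i S).card ≤ (proj i A).card := by
  rw [← Finset.card_image_of_injOn (injOn_projFun_bottomLayer i S)]
  exact Finset.card_le_card (Finset.image_subset_image ((bottomLayer_subset i S).trans hSA))

/-- `R` is what survives peeling off bottom layers in the directions of `s`, one after another. -/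
lemma exists_card_le_card_add_sum_proj (A : Finset (ι → ℤ)) (s : Finset ι) :
    ∃ R ⊆ A, A.card ≤ R.card + ∑ i ∈ s, (proj i A).card ∧
      ∀ x ∈ R, ∃ z ∈ A, (∀ i ∈ s, z i < x i) ∧ ∀ i ∉ s, z i = x i := by
  induction s using Finset.induction_on with
  | empty => exact ⟨A, subset_rfl, by simp, fun x hx => ⟨x, hx, by simp, fun _ _ => rfl⟩⟩
  | insert i s his ih =>
    obtain ⟨R, hRA, hcard, hdesc⟩ := ih
    refine ⟨R \ bottomLayer i R, Finset.sdiff_subset.trans hRA, ?_, ?_⟩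
    · have hpeel : R.card = (R \ bottomLayer i R).card + (bottomLayer i R).card :=
        (Finset.card_sdiff_add_card_eq_card (bottomLayer_subset i R)).symm
      rw [Finset.sum_insert his]
      have := card_bottomLayer_le_card_proj (i := i) hRA
      omega
    · intro x hx
      obtain ⟨hxR, hxB⟩ := Finset.mem_sdiff.mp hx
      obtain ⟨y, hyR, hyx, hyi⟩ := exists_lt_of_notMem_bottomLayer hxR hxB
      obtain ⟨z, hzA, hz_on, hz_off⟩ := hdesc y hyR
      refine ⟨z, hzA, fun j hj => ?_, fun j hj => ?_⟩
      · rcases Finset.mem_insert.mp hj with rfl | hjs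
        · exact (hz_off j his).trans_lt hyi
        · exact (hz_on j hjs).trans_eq (hyx j (ne_of_mem_of_not_mem hjs his))
      · rw [Finset.mem_insert, not_or] at hj
        exact (hz_off j hj.2).trans (hyx j hj.1)

end Peeling

theorem weakAntichain_card_le_sum_proj_general (n : ℕ)
    (A : Finset (Fin n → ℤ)) (hA : IsWeakAntichain A) :
    A.card ≤ ∑ i : Fin n, (proj i A).card := by
  obtain ⟨R, hRA, hcard, hdesc⟩ := exists_card_le_card_add_sum_proj A Finset.univ
  have hR : R = ∅ := Finset.eq_empty_of_forall_notMem fun x hx => by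
    obtain ⟨z, hzA, hzx, -⟩ := hdesc x hx
    exact hA z hzA x (hRA hx) fun i => hzx i (Finset.mem_univ i)
  simpa [hR] using hcard

/-- For every positive `n`, every finite weak antichain `A ⊆ ℤ^n` satisfies
`|A| ≤ Σ_{i=1}^n |π_i(A)|`. -/
theorem weakAntichain_card_le_sum_proj (n : ℕ) (hn : 0 < n)
    (A : Finset (Fin n → ℤ)) (hA : IsWeakAntichain A) :
    A.card ≤ ∑ i : Fin n, (proj i A).card :=
  weakAntichain_card_le_sum_proj_general n A hA

end ProjWA
end

section
/- Suppose A ⊆ ℤ_{≥0}^n is finite, layer-decomposable (A = A_1 ∪ … ∪ A_n), and k-compressed for all k < i. Then A' = C_i(A) is k-compressed for all k ≤ i, and A' is layer-decomposable. -/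
namespace ProjWA

variable {ι : Type*}

/- On a set of nonnegative points, being `k`-compressed means being closed under setting the
`k`-th coordinate to `0`; such sets have `B_k(S) = {x ∈ S : x_k = 0}`. Compressing in
direction `i` keeps closure in every other direction `k`, since zeroing coordinate `k` maps
`i`-lines into `i`-lines, and creates closure in direction `i`. Closure in all directions
`k < m` makes the first `m` layers explicit: what remains after them are the points with
`x_k > 0` for all `k < m`. For `m = i + 1` these remainders agree for `A` and `C_i(A)`, as both
consist of the points of `A \ B_i(A)` that are positive in the coordinates `k < i`; from then on
the two layer constructions coincide, so both sets leave the same (empty) remainder. -/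

open Function

section Compress

variable [Fintype ι] [DecidableEq ι] {i k : ι} {S A : Finset (ι → ℤ)} {x : ι → ℤ}

theorem mem_bottomLayer :
    x ∈ bottomLayer k S ↔ x ∈ S ∧ ∀ y ∈ S, (∀ j, j ≠ k → y j = x j) → x k ≤ y k :=
  Finset.mem_filter

theorem bottomLayer_subset_s10 : bottomLayer k S ⊆ S :=
  Finset.filter_subset _ _

theorem mem_bottomLayer_of_apply_eq_zero (h0 : ∀ y ∈ S, ∀ j, 0 ≤ y j) (hx : x ∈ S)
    (hxk : x k = 0) : x ∈ bottomLayer k S :=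
  mem_bottomLayer.2 ⟨hx, fun y hy _ => hxk ▸ h0 y hy k⟩

theorem exists_mem_bottomLayer_eq_off (hx : x ∈ S) :
    ∃ m ∈ bottomLayer k S, ∀ j, j ≠ k → m j = x j := by
  obtain ⟨m, hm, hmin⟩ := Finset.exists_min_image
    (S.filter fun y => ∀ j, j ≠ k → y j = x j) (fun y => y k) ⟨x, by simp [hx]⟩
  rw [Finset.mem_filter] at hm
  refine ⟨m, mem_bottomLayer.2 ⟨hm.1, fun y hy hym => ?_⟩, hm.2⟩
  exact hmin y (Finset.mem_filter.2 ⟨hy, fun j hj => (hym j hj).trans (hm.2 j hj)⟩)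

theorem update_zero_mem_compress (hx : x ∈ A) : update x i 0 ∈ compress i A := by
  obtain ⟨m, hm, hmx⟩ := exists_mem_bottomLayer_eq_off (k := i) hx
  have hline : update m i 0 = update x i 0 :=
    update_eq_iff.2 ⟨by simp, fun j hj => by simp [hj, hmx j hj]⟩
  exact Finset.mem_union_right _ (Finset.mem_image.2 ⟨m, hm, hline⟩)

theorem bottomLayer_eq_filter (h0 : ∀ x ∈ S, ∀ j, 0 ≤ x j)
    (hcl : ∀ x ∈ S, update x k 0 ∈ S) :
    bottomLayer k S = S.filter fun x => x k = 0 := by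
  ext x
  refine ⟨fun hx => ?_, fun hx => ?_⟩
  · obtain ⟨hxS, hmin⟩ := mem_bottomLayer.1 hx
    have hle := hmin _ (hcl x hxS) fun j hj => update_of_ne hj 0 x
    exact Finset.mem_filter.2 ⟨hxS, le_antisymm (by simpa using hle) (h0 x hxS k)⟩
  · obtain ⟨hxS, hxk⟩ := Finset.mem_filter.1 hx
    exact mem_bottomLayer_of_apply_eq_zero h0 hxS hxk

theorem compress_eq_self_iff (h0 : ∀ x ∈ S, ∀ j, 0 ≤ x j) :
    compress k S = S ↔ ∀ x ∈ S, update x k 0 ∈ S := by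
  refine ⟨fun hS x hx => hS ▸ update_zero_mem_compress hx, fun hcl => ?_⟩
  have hfix : (bottomLayer k S : Set (ι → ℤ)).EqOn (fun x => update x k 0) id := by
    intro x hx
    rw [Finset.mem_coe, bottomLayer_eq_filter h0 hcl, Finset.mem_filter] at hx
    show update x k 0 = x
    rw [← hx.2, update_eq_self]
  rw [compress, Finset.image_congr hfix, Finset.image_id,
    Finset.sdiff_union_of_subset bottomLayer_subset_s10]

theorem compress_nonneg (h0 : ∀ x ∈ A, ∀ j, 0 ≤ x j) : ∀ x ∈ compress i A, ∀ j, 0 ≤ x j := by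
  simp only [compress, Finset.mem_union, Finset.mem_sdiff, Finset.mem_image]
  rintro _ (⟨hx, -⟩ | ⟨x, hx, rfl⟩) j
  · exact h0 _ hx j
  · rcases eq_or_ne j i with rfl | hj
    · simp
    · simpa [hj] using h0 x (bottomLayer_subset_s10 hx) j

theorem update_zero_mem_compress_self (hx : x ∈ compress i A) :
    update x i 0 ∈ compress i A := by
  rcases Finset.mem_union.1 hx with hx | hx
  · exact update_zero_mem_compress (Finset.mem_sdiff.1 hx).1
  · obtain ⟨y, -, rfl⟩ := Finset.mem_image.1 hx
    rwa [update_idem]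

theorem update_zero_mem_compress_of_ne (hki : k ≠ i) (hcl : ∀ x ∈ A, update x k 0 ∈ A)
    (hx : x ∈ compress i A) : update x k 0 ∈ compress i A := by
  rcases Finset.mem_union.1 hx with hx | hx
  · obtain ⟨hxA, hxB⟩ := Finset.mem_sdiff.1 hx
    refine Finset.mem_union_left _ (Finset.mem_sdiff.2 ⟨hcl x hxA, fun hB => hxB ?_⟩)
    refine mem_bottomLayer.2 ⟨hxA, fun y hy hyx => ?_⟩
    have hle := (mem_bottomLayer.1 hB).2 (update y k 0) (hcl y hy) fun j hj => by
      rcases eq_or_ne j k with rfl | hjk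
      · simp
      · simp [hjk, hyx j hj]
    simpa [hki.symm] using hle
  · obtain ⟨y, hy, rfl⟩ := Finset.mem_image.1 hx
    rw [update_comm hki.symm]
    exact update_zero_mem_compress (hcl y (bottomLayer_subset_s10 hy))

theorem update_zero_mem_compress_of_le [PartialOrder ι]
    (hcl : ∀ k < i, ∀ x ∈ A, update x k 0 ∈ A) (hki : k ≤ i) (hx : x ∈ compress i A) :
    update x k 0 ∈ compress i A := by
  rcases hki.eq_or_lt with rfl | hki
  · exact update_zero_mem_compress_self hx
  · exact update_zero_mem_compress_of_ne hki.ne (hcl k hki) hx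

theorem filter_pos_compress (h0 : ∀ x ∈ A, ∀ j, 0 ≤ x j) :
    (compress i A).filter (fun x => 0 < x i) = A \ bottomLayer i A := by
  ext x
  simp only [Finset.mem_filter, compress, Finset.mem_union, Finset.mem_image]
  constructor
  · rintro ⟨hx | ⟨y, -, rfl⟩, hpos⟩
    · exact hx
    · simp at hpos
  · intro hx
    obtain ⟨hxA, hxB⟩ := Finset.mem_sdiff.1 hx
    refine ⟨Or.inl hx, (h0 x hxA i).lt_of_ne fun hxi => ?_⟩
    exact hxB (mem_bottomLayer_of_apply_eq_zero h0 hxA hxi.symm)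

theorem bottomLayer_filter {p : (ι → ℤ) → Prop} [DecidablePred p]
    (hp : ∀ x y, (∀ j, j ≠ k → y j = x j) → p x → p y) :
    bottomLayer k (S.filter p) = (bottomLayer k S).filter p := by
  ext x
  simp only [Finset.mem_filter, mem_bottomLayer]
  constructor
  · rintro ⟨⟨hxS, hpx⟩, hmin⟩
    exact ⟨⟨hxS, fun y hy hyx => hmin y ⟨hy, hp x y hyx hpx⟩ hyx⟩, hpx⟩
  · rintro ⟨⟨hxS, hmin⟩, hpx⟩
    exact ⟨⟨hxS, hpx⟩, fun y hy hyx => hmin y hy.1 hyx⟩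

end Compress

section Layers

variable {n m : ℕ} {S T : Finset (Fin n → ℤ)}

theorem layersRest_succ_of_lt (h : m < n) :
    layersRest S (m + 1) = layersRest S m \ bottomLayer ⟨m, h⟩ (layersRest S m) := by
  rw [layersRest, dif_pos h]

theorem layersRest_succ_of_le (h : n ≤ m) : layersRest S (m + 1) = layersRest S m := by
  rw [layersRest, dif_neg h.not_gt, Finset.sdiff_empty]

theorem layersRest_antitone : Antitone (layersRest S) :=
  antitone_nat_of_succ_le fun _ => Finset.sdiff_subset

theorem layersRest_subset : layersRest S m ⊆ S :=
  layersRest_antitone (Nat.zero_le m)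

theorem layer_subset (j : Fin n) : layer S j ⊆ S :=
  bottomLayer_subset_s10.trans layersRest_subset

theorem disjoint_layer_layersRest (j : Fin n) : Disjoint (layer S j) (layersRest S n) :=
  Finset.disjoint_of_subset_right
    ((layersRest_antitone j.isLt).trans (layersRest_succ_of_lt j.isLt).le) Finset.disjoint_sdiff

theorem exists_mem_layer_of_notMem_layersRest {x : Fin n → ℤ} (hx : x ∈ S)
    (hm : x ∉ layersRest S m) : ∃ j, x ∈ layer S j := by
  induction m with
  | zero => exact absurd hx hm
  | succ m ih =>
    by_cases hxm : x ∈ layersRest S m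
    · rcases lt_or_ge m n with h | h
      · rw [layersRest_succ_of_lt h, Finset.mem_sdiff, not_and_not_right] at hm
        exact ⟨⟨m, h⟩, hm hxm⟩
      · rw [layersRest_succ_of_le h] at hm
        exact absurd hxm hm
    · exact ih hxm

theorem eq_biUnion_layer_iff : S = Finset.univ.biUnion (layer S) ↔ layersRest S n = ∅ := by
  constructor
  · intro h
    refine Finset.eq_empty_of_forall_notMem fun x hx => ?_
    obtain ⟨j, -, hj⟩ := Finset.mem_biUnion.1 (h.subset (layersRest_subset hx))
    exact Finset.disjoint_left.1 (disjoint_layer_layersRest j) hj hx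
  · intro h
    refine subset_antisymm (fun x hx => ?_) (Finset.biUnion_subset.2 fun j _ => layer_subset j)
    obtain ⟨j, hj⟩ := exists_mem_layer_of_notMem_layersRest hx (h ▸ Finset.notMem_empty x)
    exact Finset.mem_biUnion.2 ⟨j, Finset.mem_univ j, hj⟩

theorem layersRest_eq_filter (h0 : ∀ x ∈ S, ∀ j, 0 ≤ x j)
    (hcl : ∀ k : Fin n, k.1 < m → ∀ x ∈ S, update x k 0 ∈ S) :
    layersRest S m = S.filter fun x => ∀ j : Fin n, j.1 < m → 0 < x j := by
  induction m with
  | zero => simp [layersRest]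
  | succ m ih =>
    have hR := ih fun k hk => hcl k (Nat.lt_succ_of_lt hk)
    rcases lt_or_ge m n with h | h
    · have hR0 : ∀ x ∈ layersRest S m, ∀ j, 0 ≤ x j := fun x hx => h0 x (layersRest_subset hx)
      have hRcl : ∀ x ∈ layersRest S m, update x ⟨m, h⟩ 0 ∈ layersRest S m := by
        intro x hx
        rw [hR, Finset.mem_filter] at hx ⊢
        refine ⟨hcl _ m.lt_succ_self x hx.1, fun j hj => ?_⟩
        rw [update_of_ne (Fin.ne_of_lt hj)]
        exact hx.2 j hj
      ext x
      rw [layersRest_succ_of_lt h, bottomLayer_eq_filter hR0 hRcl, Finset.mem_sdiff,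
        Finset.mem_filter, hR]
      simp only [Finset.mem_filter]
      constructor
      · rintro ⟨⟨hxS, hpos⟩, hne⟩
        refine ⟨hxS, fun j hj => ?_⟩
        rcases Nat.lt_succ_iff_lt_or_eq.1 hj with hj | hj
        · exact hpos j hj
        · obtain rfl : j = ⟨m, h⟩ := Fin.ext hj
          exact (h0 x hxS _).lt_of_ne' fun hxj => hne ⟨⟨hxS, hpos⟩, hxj⟩
      · rintro ⟨hxS, hpos⟩
        refine ⟨⟨hxS, fun j hj => hpos j (Nat.lt_succ_of_lt hj)⟩, fun hx => ?_⟩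
        exact (hpos ⟨m, h⟩ m.lt_succ_self).ne' hx.2
    · rw [layersRest_succ_of_le h, hR]
      refine Finset.filter_congr fun x _ => forall_congr' fun j => ?_
      have hj : j.1 < m := j.isLt.trans_le h
      simp only [hj, Nat.lt_succ_of_lt hj]

theorem layersRest_eq_of_le (h : layersRest S m = layersRest T m) {l : ℕ} (hml : m ≤ l) :
    layersRest S l = layersRest T l := by
  induction l, hml using Nat.le_induction with
  | base => exact h
  | succ l _ ih => rw [layersRest, layersRest, ih]

theorem layersRest_compress_succ {A : Finset (Fin n → ℤ)} {i : Fin n}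
    (h0 : ∀ x ∈ A, ∀ j, 0 ≤ x j) (hcl : ∀ k < i, ∀ x ∈ A, update x k 0 ∈ A) :
    layersRest (compress i A) (i + 1) = layersRest A (i + 1) := by
  set P : (Fin n → ℤ) → Prop := fun x => ∀ j : Fin n, j.1 < i.1 → 0 < x j
  have hP : ∀ x y : Fin n → ℤ, (∀ j, j ≠ i → y j = x j) → P x → P y :=
    fun x y hyx hx j hj => hyx j (Fin.ne_of_lt hj) ▸ hx j hj
  calc layersRest (compress i A) (i + 1)
      = (compress i A).filter fun x => ∀ j : Fin n, j.1 < i.1 + 1 → 0 < x j :=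
        layersRest_eq_filter (compress_nonneg h0) fun _ hk _ =>
          update_zero_mem_compress_of_le hcl (Nat.lt_succ_iff.1 hk)
    _ = ((compress i A).filter fun x => 0 < x i).filter P := by
        rw [Finset.filter_filter]
        refine Finset.filter_congr fun x _ => ⟨fun hx => ⟨hx i i.1.lt_succ_self,
          fun j hj => hx j (Nat.lt_succ_of_lt hj)⟩, fun ⟨hi, hx⟩ j hj => ?_⟩
        rcases Nat.lt_succ_iff_lt_or_eq.1 hj with hj | hj
        · exact hx j hj
        · exact Fin.ext hj ▸ hi
    _ = (A \ bottomLayer i A).filter P := by rw [filter_pos_compress h0]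
    _ = A.filter P \ bottomLayer i (A.filter P) := by
        rw [bottomLayer_filter hP]
        ext x
        simp only [Finset.mem_sdiff, Finset.mem_filter]
        tauto
    _ = layersRest A (i + 1) := by rw [layersRest_succ_of_lt i.isLt, layersRest_eq_filter h0 hcl]

end Layers

/-- If `A ⊆ ℤ_{≥0}^n` is finite, layer-decomposable, and `k`-compressed for
all `k < i`, then `A' = C_i(A)` is `k`-compressed for all `k ≤ i` and layer-decomposable. -/
theorem compress_compressed_and_layerDecomposable (n : ℕ) (A : Finset (Fin n → ℤ))
    (hA : ∀ x ∈ A, ∀ i, 0 ≤ x i)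
    (hdec : A = Finset.univ.biUnion (layer A)) (i : Fin n)
    (hcomp : ∀ k : Fin n, k < i → compress k A = A) :
    (∀ k : Fin n, k ≤ i → compress k (compress i A) = compress i A) ∧
      compress i A = Finset.univ.biUnion (layer (compress i A)) := by
  have hcl : ∀ k < i, ∀ x ∈ A, update x k 0 ∈ A :=
    fun k hk => (compress_eq_self_iff hA).1 (hcomp k hk)
  refine ⟨fun k hk => (compress_eq_self_iff (compress_nonneg hA)).2 fun x hx =>
    update_zero_mem_compress_of_le hcl hk hx, ?_⟩
  rw [eq_biUnion_layer_iff] at hdec ⊢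
  rw [← hdec]
  exact layersRest_eq_of_le (layersRest_compress_succ hA hcl) i.isLt

end ProjWA
end

section
/- If A ⊆ X_n is finite, then for every i and every j the complete i-compression does not increase the j-th projection: |π_j(𝒞_i(A))| ≤ |π_j(A)|. Moreover, for j ≠ i one has π_j(𝒞_i(A)) ⊆ 𝒞_i(π_j(A)). -/
namespace ProjWA

variable {ι : Type*}

/-
Complete compression only moves points along lines in direction `i`, keeping the size of each
line, so `π_i` is untouched and `|𝒞_i(A)| = |A|`. For `j ≠ i`, `π_j` maps the line of `A` in
direction `i` through `x` injectively into the line of `π_j(A)` through `π_j(x)`; hence the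
initial segment replacing the former is contained in the one replacing the latter, which gives
`π_j(𝒞_i(A)) ⊆ 𝒞_i(π_j(A))`, and taking cardinalities `|π_j(𝒞_i(A))| ≤ |𝒞_i(π_j(A))| = |π_j(A)|`.
-/

section Line

variable [DecidableEq ι]

def line [Fintype ι] (i : ι) (A : Finset (ι → ℤ)) (x : ι → ℤ) : Finset (ι → ℤ) :=
  A.filter fun y => ∀ j, j ≠ i → y j = x j

lemma projFun_eq_projFun_iff {i : ι} {x y : ι → ℤ} :
    projFun i y = projFun i x ↔ ∀ j, j ≠ i → y j = x j :=
  ⟨fun h j hj => congrFun h ⟨j, hj⟩, fun h => funext fun j => h j.1 j.2⟩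

lemma projFun_update_self (i : ι) (x : ι → ℤ) (a : ℤ) :
    projFun i (Function.update x i a) = projFun i x :=
  funext fun j => show Function.update x i a j = x j from Function.update_of_ne j.2 a x

lemma projFun_update_of_ne {i j : ι} (hij : i ≠ j) (x : ι → ℤ) (a : ℤ) :
    projFun j (Function.update x i a)
      = Function.update (projFun j x) (⟨i, hij⟩ : {k : ι // k ≠ j}) a := by
  funext k
  by_cases hk : k = ⟨i, hij⟩
  · subst hk
    simp [projFun]
  · have hki : k.1 ≠ i := fun h => hk (Subtype.ext h)
    simp only [projFun, Function.update_of_ne hki, Function.update_of_ne hk]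

lemma update_eq_update_of_projFun_eq {i : ι} {x y : ι → ℤ} (h : projFun i y = projFun i x)
    (a : ℤ) : Function.update y i a = Function.update x i a := by
  funext k
  by_cases hk : k = i
  · subst hk
    simp
  · simp only [Function.update_of_ne hk]
    exact projFun_eq_projFun_iff.mp h k hk

variable [Fintype ι]

lemma line_eq_filter_projFun (i : ι) (A : Finset (ι → ℤ)) (x : ι → ℤ) :
    line i A x = A.filter fun y => projFun i y = projFun i x :=
  Finset.filter_congr fun _ _ => projFun_eq_projFun_iff.symm

lemma mem_line_self {i : ι} {A : Finset (ι → ℤ)} {x : ι → ℤ} (hx : x ∈ A) : x ∈ line i A x :=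
  Finset.mem_filter.mpr ⟨hx, fun _ _ => rfl⟩

lemma line_congr {i : ι} (A : Finset (ι → ℤ)) {x y : ι → ℤ} (h : projFun i y = projFun i x) :
    line i A y = line i A x := by
  rw [line_eq_filter_projFun, line_eq_filter_projFun, h]

lemma mem_ccompress {i : ι} {A : Finset (ι → ℤ)} {z : ι → ℤ} :
    z ∈ ccompress i A ↔ ∃ x ∈ A, ∃ a : ℕ, a < (line i A x).card ∧ z = Function.update x i a := by
  simp only [ccompress, line, Finset.mem_biUnion, Finset.mem_image, Finset.mem_range, eq_comm]

lemma card_line_le_card_line_proj {i j : ι} (hij : i ≠ j) (A : Finset (ι → ℤ)) (x : ι → ℤ) :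
    (line i A x).card ≤ (line ⟨i, hij⟩ (proj j A) (projFun j x)).card := by
  refine Finset.card_le_card_of_injOn (projFun j) (fun y hy => ?_) fun y hy y' hy' h => ?_
  · obtain ⟨hyA, hyx⟩ := Finset.mem_filter.mp hy
    exact Finset.mem_filter.mpr
      ⟨Finset.mem_image_of_mem _ hyA, fun k hk => hyx k.1 fun h => hk (Subtype.ext h)⟩
  · have hy := (Finset.mem_filter.mp hy).2
    have hy' := (Finset.mem_filter.mp hy').2
    funext k
    by_cases hki : k = i
    · subst hki
      exact congrFun h ⟨k, hij⟩
    · rw [hy k hki, hy' k hki]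

end Line

section Compression

variable [Fintype ι] [DecidableEq ι]

lemma proj_ccompress_self (i : ι) (A : Finset (ι → ℤ)) : proj i (ccompress i A) = proj i A := by
  ext p
  simp only [proj, Finset.mem_image]
  constructor
  · rintro ⟨z, hz, rfl⟩
    obtain ⟨x, hx, a, -, rfl⟩ := mem_ccompress.mp hz
    exact ⟨x, hx, (projFun_update_self i x a).symm⟩
  · rintro ⟨x, hx, rfl⟩
    refine ⟨Function.update x i ((0 : ℕ) : ℤ), mem_ccompress.mpr ⟨x, hx, 0, ?_, rfl⟩,
      projFun_update_self i x _⟩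
    exact Finset.card_pos.mpr ⟨x, mem_line_self hx⟩

lemma filter_ccompress_projFun_eq (i : ι) (A : Finset (ι → ℤ)) (x : ι → ℤ) (hx : x ∈ A) :
    (ccompress i A).filter (fun z => projFun i z = projFun i x)
      = (Finset.range (line i A x).card).image fun a : ℕ => Function.update x i (a : ℤ) := by
  ext z
  simp only [Finset.mem_filter, Finset.mem_image, Finset.mem_range, mem_ccompress]
  constructor
  · rintro ⟨⟨y, -, a, ha, rfl⟩, hyx⟩
    rw [projFun_update_self] at hyx
    exact ⟨a, line_congr A hyx ▸ ha, (update_eq_update_of_projFun_eq hyx a).symm⟩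
  · rintro ⟨a, ha, rfl⟩
    exact ⟨⟨x, hx, a, ha, rfl⟩, projFun_update_self i x a⟩

lemma card_ccompress (i : ι) (A : Finset (ι → ℤ)) : (ccompress i A).card = A.card := by
  have hcA : ∀ z ∈ ccompress i A, projFun i z ∈ proj i A := fun z hz =>
    proj_ccompress_self i A ▸ Finset.mem_image_of_mem _ hz
  rw [Finset.card_eq_sum_card_fiberwise hcA,
    Finset.card_eq_sum_card_fiberwise fun x hx => Finset.mem_image_of_mem (projFun i) hx]
  refine Finset.sum_congr rfl fun p hp => ?_
  obtain ⟨x, hx, rfl⟩ := Finset.mem_image.mp hp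
  rw [filter_ccompress_projFun_eq i A x hx, ← line_eq_filter_projFun,
    Finset.card_image_of_injective _ fun a b hab => by simpa using congrFun hab i,
    Finset.card_range]

lemma proj_ccompress_subset_ccompress_proj {i j : ι} (hij : i ≠ j) (A : Finset (ι → ℤ)) :
    proj j (ccompress i A) ⊆ ccompress (⟨i, hij⟩ : {k : ι // k ≠ j}) (proj j A) := by
  intro p hp
  obtain ⟨z, hz, rfl⟩ := Finset.mem_image.mp hp
  obtain ⟨x, hx, a, ha, rfl⟩ := mem_ccompress.mp hz
  rw [projFun_update_of_ne hij]
  exact mem_ccompress.mpr ⟨projFun j x, Finset.mem_image_of_mem _ hx, a,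
    ha.trans_le (card_line_le_card_line_proj hij A x), rfl⟩

lemma card_proj_ccompress_le (i j : ι) (A : Finset (ι → ℤ)) :
    (proj j (ccompress i A)).card ≤ (proj j A).card := by
  by_cases hij : i = j
  · subst hij
    rw [proj_ccompress_self]
  · calc (proj j (ccompress i A)).card
        ≤ (ccompress (⟨i, hij⟩ : {k : ι // k ≠ j}) (proj j A)).card :=
          Finset.card_le_card (proj_ccompress_subset_ccompress_proj hij A)
      _ = (proj j A).card := card_ccompress _ _

end Compression

theorem proj_ccompress_general (n : ℕ) (A : Finset (Fin n → ℤ)) (i : Fin n) :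
    (∀ j : Fin n, (proj j (ccompress i A)).card ≤ (proj j A).card) ∧
      ∀ (j : Fin n) (hij : i ≠ j),
        proj j (ccompress i A) ⊆ ccompress (⟨i, hij⟩ : {k : Fin n // k ≠ j}) (proj j A) :=
  ⟨fun j => card_proj_ccompress_le i j A,
    fun _ hij => proj_ccompress_subset_ccompress_proj hij A⟩

/-- If `A ⊆ X_n` is finite then for every `i` and every `j` the complete
`i`-compression does not increase the `j`-th projection, `|π_j(𝒞_i(A))| ≤ |π_j(A)|`;
moreover for `j ≠ i` one has `π_j(𝒞_i(A)) ⊆ 𝒞_i(π_j(A))`. -/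
theorem proj_ccompress (n : ℕ) (A : Finset (Fin n → ℤ)) (hA : ↑A ⊆ XSet (Fin n))
    (i : Fin n) :
    (∀ j : Fin n, (proj j (ccompress i A)).card ≤ (proj j A).card) ∧
      ∀ (j : Fin n) (hij : i ≠ j),
        proj j (ccompress i A) ⊆ ccompress (⟨i, hij⟩ : {k : Fin n // k ≠ j}) (proj j A) :=
  proj_ccompress_general n A i

end ProjWA
end

section
/- The balanced order is a strict total order on X_n: for all distinct x, y ∈ X_n exactly one of x < y, y < x holds, and the relation is transitive. -/
namespace ProjWA

variable {ι : Type*}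

/-!
The balanced order is the colex order on graphs. Record `x` by its graph `{(x i, i)}`, with
pairs ordered lexicographically. The graphs of `x` and `y` differ exactly in the pairs with
`i ∈ T`, and if `x < y` the largest of these is `(max y', i)` with `i` the last index where
`y'` attains its maximum, which lies in the graph of `y` only. So the balanced order is the
pullback of the strict colex order along an injective map.
-/

section Balanced

open Finset Finset.Colex

lemma mem_diffSet [Fintype ι] {x y : ι → ℤ} {i : ι} : i ∈ diffSet x y ↔ x i ≠ y i := by
  simp [diffSet]

lemma diffSet_comm [Fintype ι] (x y : ι → ℤ) : diffSet x y = diffSet y x := by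
  simp [diffSet, ne_comm]

lemma diffSet_nonempty [Fintype ι] {x y : ι → ℤ} (h : x ≠ y) : (diffSet x y).Nonempty :=
  let ⟨i, hi⟩ := Function.ne_iff.1 h
  ⟨i, mem_diffSet.2 hi⟩

lemma le_maxOn {s : Finset ι} {x : ι → ℤ} {i : ι} (hi : i ∈ s) :
    (x i : WithBot ℤ) ≤ maxOn s x :=
  le_max (mem_image_of_mem x hi)

lemma le_argmaxOn [LinearOrder ι] {s : Finset ι} {x : ι → ℤ} {i : ι} (hi : i ∈ s)
    (h : (x i : WithBot ℤ) = maxOn s x) : (i : WithBot ι) ≤ argmaxOn s x :=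
  le_max (mem_filter.2 ⟨hi, h⟩)

lemma exists_argmaxOn_eq [LinearOrder ι] {s : Finset ι} (x : ι → ℤ) (hs : s.Nonempty) :
    ∃ j ∈ s, argmaxOn s x = j ∧ (x j : WithBot ℤ) = maxOn s x := by
  obtain ⟨m, hm⟩ := max_of_nonempty (hs.image x)
  obtain ⟨i, hi, hxi⟩ := mem_image.1 (mem_of_max hm)
  have hne : (s.filter fun i => (x i : WithBot ℤ) = maxOn s x).Nonempty :=
    ⟨i, mem_filter.2 ⟨hi, by rw [maxOn, hm, hxi]⟩⟩
  obtain ⟨j, hj⟩ := max_of_nonempty hne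
  obtain ⟨hjs, hjx⟩ := mem_filter.1 (mem_of_max hj)
  exact ⟨j, hjs, hj, hjx⟩

variable [Fintype ι] [LinearOrder ι]

def graphLex (x : ι → ℤ) : Finset (Lex (ℤ × ι)) :=
  univ.image fun i => toLex (x i, i)

lemma mem_graphLex {x : ι → ℤ} {a : ℤ} {i : ι} :
    toLex (a, i) ∈ graphLex x ↔ x i = a := by
  simp [graphLex, and_comm, eq_comm]

lemma toColex_graphLex_lt_of_balancedLT {x y : ι → ℤ} (h : balancedLT x y) :
    toColex (graphLex x) < toColex (graphLex y) := by
  obtain ⟨hne, hlt⟩ := h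
  set T := diffSet x y
  obtain ⟨j, hjT, hj, hyj⟩ := exists_argmaxOn_eq y (diffSet_nonempty hne)
  refine toColex_lt_toColex_iff_exists_forall_lt.2 ⟨toLex (y j, j), mem_graphLex.2 rfl,
    fun hmem => mem_diffSet.1 hjT (mem_graphLex.1 hmem), ?_⟩
  intro b hb hby
  obtain ⟨i, -, rfl⟩ := mem_image.1 hb
  have hiT : i ∈ T := mem_diffSet.2 fun hxy => hby (mem_graphLex.2 hxy.symm)
  have hxi : (x i : WithBot ℤ) ≤ maxOn T x := le_maxOn hiT
  rw [Prod.Lex.toLex_lt_toLex]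
  rcases hlt with hlt | ⟨heq, harg⟩
  · exact .inl (WithBot.coe_lt_coe.1 (hxi.trans_lt (hlt.trans_eq hyj.symm)))
  · obtain hlt' | heq' := (WithBot.coe_le_coe.1 (hxi.trans (heq.trans hyj.symm).le)).lt_or_eq
    · exact .inl hlt'
    · have hi : (i : WithBot ι) ≤ argmaxOn T x := le_argmaxOn hiT (by rw [heq', hyj, heq])
      exact .inr ⟨heq', WithBot.coe_lt_coe.1 (hi.trans_lt (harg.trans_eq hj))⟩

lemma balancedLT_or_balancedLT {x y : ι → ℤ} (hne : x ≠ y) :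
    balancedLT x y ∨ balancedLT y x := by
  have hT : diffSet y x = diffSet x y := diffSet_comm y x
  set T := diffSet x y
  rcases lt_trichotomy (maxOn T x) (maxOn T y) with h | h | h
  · exact .inl ⟨hne, .inl h⟩
  · obtain ⟨i, hiT, hi, hxi⟩ := exists_argmaxOn_eq x (diffSet_nonempty hne)
    obtain ⟨j, -, hj, hyj⟩ := exists_argmaxOn_eq y (diffSet_nonempty hne)
    have harg : argmaxOn T x ≠ argmaxOn T y := by
      rw [hi, hj, Ne, WithBot.coe_inj]
      rintro rfl
      exact mem_diffSet.1 hiT (WithBot.coe_inj.1 (by rw [hxi, hyj, h]))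
    rcases harg.lt_or_gt with h' | h'
    · exact .inl ⟨hne, .inr ⟨h, h'⟩⟩
    · exact .inr ⟨hne.symm, .inr (hT ▸ ⟨h.symm, h'⟩)⟩
  · exact .inr ⟨hne.symm, .inl (hT ▸ h)⟩

theorem balancedLT_iff_toColex_graphLex_lt {x y : ι → ℤ} :
    balancedLT x y ↔ toColex (graphLex x) < toColex (graphLex y) := by
  refine ⟨toColex_graphLex_lt_of_balancedLT, fun h => ?_⟩
  have hne : x ≠ y := by
    rintro rfl
    exact h.false
  exact (balancedLT_or_balancedLT hne).resolve_right
    fun h' => (toColex_graphLex_lt_of_balancedLT h').asymm h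

lemma balancedLT_asymm {x y : ι → ℤ} (h : balancedLT x y) : ¬ balancedLT y x := by
  rw [balancedLT_iff_toColex_graphLex_lt] at h ⊢
  exact h.asymm

lemma balancedLT_trans {x y z : ι → ℤ} (hxy : balancedLT x y) (hyz : balancedLT y z) :
    balancedLT x z := by
  rw [balancedLT_iff_toColex_graphLex_lt] at hxy hyz ⊢
  exact hxy.trans hyz

end Balanced

/-- The balanced order is a strict total order on `X_n`: for distinct
`x, y ∈ X_n` exactly one of `x < y`, `y < x` holds, and the relation is transitive. -/
theorem balancedLT_total_order (n : ℕ) :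
    (∀ x ∈ XSet (Fin n), ∀ y ∈ XSet (Fin n), x ≠ y →
        Xor' (balancedLT x y) (balancedLT y x)) ∧
    (∀ x ∈ XSet (Fin n), ∀ y ∈ XSet (Fin n), ∀ z ∈ XSet (Fin n),
        balancedLT x y → balancedLT y z → balancedLT x z) := by
  refine ⟨fun x _ y _ hne => ?_, fun x _ y _ z _ => balancedLT_trans⟩
  rcases balancedLT_or_balancedLT hne with h | h
  · exact .inl ⟨h, balancedLT_asymm h⟩
  · exact .inr ⟨h, balancedLT_asymm h⟩

end ProjWA
end
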